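/- (A posteriori error control with Lipschitz extension) In the abstract semilinear framework, suppose u is a regular solution with inf-sup constant β > 0, (H4) holds with constant Λ₄, and v_h ∈ X_h satisfies ‖u − v_h‖_{X̂} ≤ ε ≤ κβ/(‖Γ‖(1+Λ₄)) for some 0 < κ < 1. Let N̂ be the extension of N to X̂. Then, with C_rel,1 := 1/(β(1−κ)), L := ‖â‖ + 2‖Γ̂‖(‖u‖_X + ε(1+Λ₄)), C_rel,2 := 1 + L·C_rel,1, and C_eff,1 := (1+Λ₄)(‖DN(u)‖+β) + L·Λ₄: reliability ‖u − v_h‖_{X̂} ≤ C_rel,1 ‖N̂(v_h)‖_{Y*} + C_rel,2 ‖Qv_h − v_h‖_{X̂} and efficiency ‖N̂(v_h)‖_{Y*} ≤ C_eff,1 ‖u − v_h‖_{X̂} hold. -/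

import Mathlib

/-!
Write `N x = a x + Γ x x - F`. Since `N` is quadratic, its Taylor expansion at the root `u` is
exact: `N x = DN(u)(x - u) + Γ(x - u, x - u)`. Hence for `x ∈ X` with `‖Γ‖ ‖x - u‖ ≤ κ β` the
inf-sup condition gives `β (1 - κ) ‖x - u‖ ≤ ‖N x‖`, and boundedness of `DN(u)` gives
`‖N x‖ ≤ (‖DN(u)‖ + β) ‖x - u‖`. A discrete `v_h` is compared with `Q v_h ∈ X`, which by (H4)
lies within `(1 + Λ₄) ‖u - v_h‖` of `u` and within `Λ₄ ‖u - v_h‖` of `v_h`; the Lipschitz bound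
for `N̂` on the ball of radius `ε (1 + Λ₄)` around `u` carries both estimates from `Q v_h` over
to `v_h`.
-/

open Metric

section QuadraticResidual

variable {𝕜 E Z : Type*} [NontriviallyNormedField 𝕜] [SeminormedAddCommGroup E]
  [NormedSpace 𝕜 E] [SeminormedAddCommGroup Z] [NormedSpace 𝕜 Z]

noncomputable def quadResidual (a : E →L[𝕜] Z) (Γ : E →L[𝕜] E →L[𝕜] Z) (F : Z) (x : E) : Z :=
  a x + Γ x x - F

noncomputable def quadResidualDeriv (a : E →L[𝕜] Z) (Γ : E →L[𝕜] E →L[𝕜] Z) (u : E) : E →L[𝕜] Z :=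
  a + Γ u + Γ.flip u

variable (a : E →L[𝕜] Z) (Γ : E →L[𝕜] E →L[𝕜] Z) (F : Z)

theorem quadResidual_sub_quadResidual (x y : E) :
    quadResidual a Γ F x - quadResidual a Γ F y = a (x - y) + Γ (x - y) x + Γ y (x - y) := by
  simp only [quadResidual, map_sub, sub_apply]
  abel

theorem norm_quadResidual_sub_le {u x y : E} {r s : ℝ} (hx : ‖x - u‖ ≤ r) (hy : ‖y - u‖ ≤ r)
    (hxy : ‖x - y‖ ≤ s) :
    ‖quadResidual a Γ F x - quadResidual a Γ F y‖ ≤ (‖a‖ + 2 * ‖Γ‖ * (‖u‖ + r)) * s := by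
  have hxr : ‖x‖ ≤ ‖u‖ + r := (norm_le_norm_add_norm_sub' x u).trans (by linarith)
  have hyr : ‖y‖ ≤ ‖u‖ + r := (norm_le_norm_add_norm_sub' y u).trans (by linarith)
  calc ‖quadResidual a Γ F x - quadResidual a Γ F y‖
      ≤ ‖a‖ * ‖x - y‖ + ‖Γ‖ * ‖x - y‖ * ‖x‖ + ‖Γ‖ * ‖y‖ * ‖x - y‖ := by
        rw [quadResidual_sub_quadResidual]
        exact norm_add₃_le.trans
          (add_le_add_three (a.le_opNorm _) (Γ.le_opNorm₂ _ _) (Γ.le_opNorm₂ _ _))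
    _ = (‖a‖ + ‖Γ‖ * (‖x‖ + ‖y‖)) * ‖x - y‖ := by ring
    _ ≤ (‖a‖ + ‖Γ‖ * ((‖u‖ + r) + (‖u‖ + r))) * s := by
        have hr : 0 ≤ ‖u‖ + r := hxr.trans' (norm_nonneg x)
        gcongr
    _ = (‖a‖ + 2 * ‖Γ‖ * (‖u‖ + r)) * s := by ring

variable {a Γ F}

theorem quadResidual_eq_deriv_add {u : E} (hu : quadResidual a Γ F u = 0) (x : E) :
    quadResidual a Γ F x = quadResidualDeriv a Γ u (x - u) + Γ (x - u) (x - u) := by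
  rw [← sub_zero (quadResidual a Γ F x), ← hu]
  simp only [quadResidual, quadResidualDeriv, map_sub, sub_apply,
    add_apply, ContinuousLinearMap.flip_apply]
  abel

variable {X : Submodule 𝕜 E} {c : ℝ} {u : X}

theorem norm_quadResidual_sub_deriv_le (hΓ : ∀ x ξ : X, ‖Γ x ξ‖ ≤ c * ‖x‖ * ‖ξ‖)
    (hu : quadResidual a Γ F u = 0) (x : X) :
    ‖quadResidual a Γ F x - quadResidualDeriv a Γ u (x - u : X)‖ ≤ c * ‖x - u‖ * ‖x - u‖ := by
  rw [quadResidual_eq_deriv_add hu, Submodule.coe_sub, add_sub_cancel_left]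
  exact hΓ (x - u) (x - u)

theorem mul_norm_sub_le_norm_quadResidual (hΓ : ∀ x ξ : X, ‖Γ x ξ‖ ≤ c * ‖x‖ * ‖ξ‖)
    (hu : quadResidual a Γ F u = 0) {β κ : ℝ}
    (hinfsup : ∀ x : X, β * ‖x‖ ≤ ‖quadResidualDeriv a Γ u x‖) {x : X}
    (hx : c * ‖x - u‖ ≤ κ * β) :
    β * (1 - κ) * ‖x - u‖ ≤ ‖quadResidual a Γ F x‖ := by
  have hremainder := norm_quadResidual_sub_deriv_le hΓ hu x
  have htriangle := norm_le_norm_add_norm_sub (quadResidual a Γ F x)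
    (quadResidualDeriv a Γ u (x - u : X))
  have hsmall := mul_le_mul_of_nonneg_right hx (norm_nonneg (x - u))
  linarith [hinfsup (x - u)]

theorem norm_quadResidual_le_mul_norm_sub (hΓ : ∀ x ξ : X, ‖Γ x ξ‖ ≤ c * ‖x‖ * ‖ξ‖)
    (hu : quadResidual a Γ F u = 0)
    {β : ℝ} {x : X} (hx : c * ‖x - u‖ ≤ β) :
    ‖quadResidual a Γ F x‖ ≤ (‖(quadResidualDeriv a Γ u).comp X.subtypeL‖ + β) * ‖x - u‖ := by
  have hremainder := norm_quadResidual_sub_deriv_le hΓ hu x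
  have htriangle := norm_le_norm_sub_add (quadResidual a Γ F x)
    (quadResidualDeriv a Γ u (x - u : X))
  have hderiv := ((quadResidualDeriv a Γ u).comp X.subtypeL).le_opNorm (x - u)
  have hsmall := mul_le_mul_of_nonneg_right hx (norm_nonneg (x - u))
  simp only [ContinuousLinearMap.comp_apply, Submodule.subtypeL_apply] at hderiv
  linarith

end QuadraticResidual

section Comparison

variable {E Z : Type*} [SeminormedAddCommGroup E] [SeminormedAddCommGroup Z]

theorem norm_sub_le_mul_norm_sub_of_le_mul_infDist {S : Set E} {u y w : E} {Λ : ℝ}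
    (hΛ : 0 ≤ Λ) (hu : u ∈ S) (h : ‖y - w‖ ≤ Λ * infDist y S) : ‖y - w‖ ≤ Λ * ‖u - y‖ := by
  refine h.trans (mul_le_mul_of_nonneg_left ?_ hΛ)
  rw [← dist_eq_norm, dist_comm]
  exact infDist_le_dist_of_mem hu

theorem norm_sub_le_one_add_mul_norm_sub_of_le_mul_infDist {S : Set E} {u y w : E} {Λ : ℝ}
    (hΛ : 0 ≤ Λ) (hu : u ∈ S) (h : ‖y - w‖ ≤ Λ * infDist y S) :
    ‖w - u‖ ≤ (1 + Λ) * ‖u - y‖ := by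
  have hyw := norm_sub_le_mul_norm_sub_of_le_mul_infDist hΛ hu h
  rw [norm_sub_rev]
  linarith [norm_sub_le_norm_sub_add_norm_sub u y w]

variable {N : E → Z} {u x y : E}

theorem norm_sub_le_of_mul_norm_sub_le_norm {c L : ℝ} (hc : 0 < c) (hx : c * ‖x - u‖ ≤ ‖N x‖)
    (hL : ‖N x - N y‖ ≤ L * ‖x - y‖) :
    ‖u - y‖ ≤ 1 / c * ‖N y‖ + (1 + L * (1 / c)) * ‖x - y‖ := by
  have hxu : ‖x - u‖ ≤ 1 / c * ‖N x‖ := by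
    rw [one_div_mul_eq_div, le_div_iff₀ hc]; linarith
  have hNx := mul_le_mul_of_nonneg_left
    ((norm_le_norm_add_norm_sub' (N x) (N y)).trans (add_le_add_right hL _)) (one_div_pos.2 hc).le
  have huy : ‖u - y‖ ≤ ‖x - u‖ + ‖x - y‖ := by
    rw [norm_sub_rev x u]; exact norm_sub_le_norm_sub_add_norm_sub u x y
  linarith

theorem norm_le_of_norm_le_mul_norm_sub {C L Λ : ℝ} (hC : 0 ≤ C) (hx : ‖N x‖ ≤ C * ‖x - u‖)
    (hL : ‖N x - N y‖ ≤ L * (Λ * ‖u - y‖)) (hxu : ‖x - u‖ ≤ (1 + Λ) * ‖u - y‖) :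
    ‖N y‖ ≤ ((1 + Λ) * C + L * Λ) * ‖u - y‖ := by
  have hNy := norm_le_norm_add_norm_sub (N x) (N y)
  have hCx := mul_le_mul_of_nonneg_left hxu hC
  linarith

end Comparison

theorem aposteriori_error_control
    {Xhat Y : Type*} [NormedAddCommGroup Xhat] [NormedSpace ℝ Xhat]
    [NormedAddCommGroup Y] [NormedSpace ℝ Y]
    (X Xd : Submodule ℝ Xhat)
    (ahat : Xhat →L[ℝ] StrongDual ℝ Y) (Fhat : StrongDual ℝ Y)
    (Γhat : Xhat →L[ℝ] Xhat →L[ℝ] StrongDual ℝ Y)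
    (u : ↥X)
    (hu : ahat (u : Xhat) + Γhat (u : Xhat) (u : Xhat) = Fhat)          -- N(u) = 0
    (β : ℝ) (hβ : 0 < β)
    -- inf-sup condition for DN(u;·,·) on X × Y
    (hinfsup : ∀ x : ↥X, β * ‖x‖ ≤
      ‖ahat (x : Xhat) + Γhat (u : Xhat) (x : Xhat) + Γhat.flip (u : Xhat) (x : Xhat)‖)
    -- nΓX = ‖Γ‖, the norm of the restriction of Γ̂ to X × X × Y
    (nΓX : ℝ)
    (hnΓX : IsLeast {c : ℝ | 0 ≤ c ∧
      ∀ x ξ : ↥X, ‖Γhat (x : Xhat) (ξ : Xhat)‖ ≤ c * ‖x‖ * ‖ξ‖} nΓX)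
    (Q : ↥Xd →L[ℝ] ↥X) (Λ₄ : ℝ) (hΛ₄ : 0 ≤ Λ₄)
    (H4 : ∀ xh : ↥Xd,
      ‖(xh : Xhat) - ((Q xh : ↥X) : Xhat)‖ ≤ Λ₄ * infDist (xh : Xhat) (X : Set Xhat))
    (vh : ↥Xd) (ε κ : ℝ) (hκ0 : 0 < κ) (hκ1 : κ < 1)
    (hvh : ‖(u : Xhat) - (vh : Xhat)‖ ≤ ε)
    (hε : ε ≤ κ * β / (nΓX * (1 + Λ₄))) :
    -- reliability and efficiency with the explicit constants of Corollary 3.5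
    (‖(u : Xhat) - (vh : Xhat)‖ ≤
        (1 / (β * (1 - κ))) * ‖ahat (vh : Xhat) + Γhat (vh : Xhat) (vh : Xhat) - Fhat‖ +
        (1 + (‖ahat‖ + 2 * @norm _ (ContinuousLinearMap.hasOpNorm (𝕜 := ℝ) (𝕜₂ := ℝ) (σ₁₂ := RingHom.id ℝ) (E := Xhat)
          (F := Xhat →L[ℝ] StrongDual ℝ Y)) Γhat * (‖u‖ + ε * (1 + Λ₄))) * (1 / (β * (1 - κ)))) *
          ‖((Q vh : ↥X) : Xhat) - (vh : Xhat)‖) ∧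
    (‖ahat (vh : Xhat) + Γhat (vh : Xhat) (vh : Xhat) - Fhat‖ ≤
        ((1 + Λ₄) *
            (‖(ahat + Γhat (u : Xhat) + Γhat.flip (u : Xhat)).comp X.subtypeL‖ + β) +
          (‖ahat‖ + 2 * @norm _ (ContinuousLinearMap.hasOpNorm (𝕜 := ℝ) (𝕜₂ := ℝ) (σ₁₂ := RingHom.id ℝ) (E := Xhat)
          (F := Xhat →L[ℝ] StrongDual ℝ Y)) Γhat * (‖u‖ + ε * (1 + Λ₄))) * Λ₄) *
          ‖(u : Xhat) - (vh : Xhat)‖) := by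
  have hroot : quadResidual ahat Γhat Fhat u = 0 := sub_eq_zero.mpr hu
  set w : ↥X := Q vh
  have hρ : ‖(w : Xhat) - vh‖ ≤ Λ₄ * ‖(u : Xhat) - vh‖ := by
    rw [norm_sub_rev]; exact norm_sub_le_mul_norm_sub_of_le_mul_infDist hΛ₄ u.2 (H4 vh)
  have hη : ‖w - u‖ ≤ (1 + Λ₄) * ‖(u : Xhat) - vh‖ :=
    norm_sub_le_one_add_mul_norm_sub_of_le_mul_infDist hΛ₄ u.2 (H4 vh)
  have hηε : ‖w - u‖ ≤ ε * (1 + Λ₄) := hη.trans (by rw [mul_comm]; gcongr)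
  have hvh_ball : ‖(vh : Xhat) - u‖ ≤ ε * (1 + Λ₄) := by
    rw [norm_sub_rev]
    exact hvh.trans (le_mul_of_one_le_right (hvh.trans' (norm_nonneg _)) (by linarith))
  have hsmall : nΓX * ‖w - u‖ ≤ κ * β :=
    calc nΓX * ‖w - u‖ ≤ nΓX * (ε * (1 + Λ₄)) := by gcongr; exact hnΓX.1.1
      _ = ε * (nΓX * (1 + Λ₄)) := by ring
      _ ≤ κ * β := mul_le_of_le_div₀ (by positivity) (mul_nonneg hnΓX.1.1 (by linarith)) hε
  have hLip := fun {s : ℝ} (hs : ‖(w : Xhat) - vh‖ ≤ s) =>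
    norm_quadResidual_sub_le ahat Γhat Fhat (u := u) hηε hvh_ball hs
  exact ⟨norm_sub_le_of_mul_norm_sub_le_norm (mul_pos hβ (by linarith))
      (mul_norm_sub_le_norm_quadResidual hnΓX.1.2 hroot hinfsup hsmall) (hLip le_rfl),
    norm_le_of_norm_le_mul_norm_sub (by positivity)
      (norm_quadResidual_le_mul_norm_sub hnΓX.1.2 hroot
        (hsmall.trans (mul_le_of_le_one_left hβ.le hκ1.le))) (hLip hρ) hη⟩
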